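/- Let A ∈ ℝ^{n×d_a}, B ∈ ℝ^{n×d_b} with Σ_{xx} = AᵀA and Σ_{yy} = BᵀB positive definite, Σ_{xy} = AᵀB, and let M = Σ_{xx}^{-1/2} Σ_{xy} Σ_{yy}^{-1/2} have SVD M = UΣVᵀ with non-increasing singular values. Then among pairs P ∈ ℝ^{d'×d_a}, Q ∈ ℝ^{d'×d_b} satisfying the whitening constraints PΣ_{xx}Pᵀ = I_{d'} and QΣ_{yy}Qᵀ = I_{d'}, the objective ⟨PΣ_{xy}, Q⟩ is maximized by P = U_{:,1:d'}ᵀ Σ_{xx}^{-1/2}, Q = V_{:,1:d'}ᵀ Σ_{yy}^{-1/2}, with maximal value σ₁ + ... + σ_{d'}. -/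

import Mathlib

open Matrix BigOperators Finset

/-!
In the variables `X = P Rx U` and `Y = Q Ry V` the constraints become `X Xᵀ = Y Yᵀ = 1` and the
objective becomes `tr (X S Yᵀ)`, `S` the rectangular diagonal of singular values. Bounding
`X i k * σ k * Y i k` by `σ k * (X i k ^ 2 + Y i k ^ 2) / 2` leaves the mean of
`∑ k, σ k * ‖X_{:,k}‖²` and the same sum for `Y`. The column weights `‖X_{:,k}‖²` lie in
`[0, 1]` (`XᵀX` is a projection) and add up to `d'`; against such weights a nonincreasing
sequence sums to at most its first `d'` terms. The truncated singular vectors give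
`X = Y = [1 0]`, where every inequality is an equality.
-/

theorem sum_mul_le_sum_range_of_antitone {N d : ℕ} (hd : d ≤ N) {σ : ℕ → ℝ} (hσ : Antitone σ)
    (hσd : 0 ≤ σ d) {t : Fin N → ℝ} (ht0 : ∀ j, 0 ≤ t j) (ht1 : ∀ j, t j ≤ 1)
    (ht : ∑ j, t j ≤ d) : ∑ j : Fin N, σ j * t j ≤ ∑ m ∈ range d, σ m := by
  set c := σ d
  have hpos : ∑ m ∈ range N, (σ m - c)⁺ = ∑ m ∈ range d, (σ m - c) := by
    rw [← sum_subset (range_subset_range.mpr hd) fun m _ hm =>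
      posPart_eq_zero.mpr (sub_nonpos.mpr (hσ (not_lt.mp (mem_range.not.mp hm))))]
    exact sum_congr rfl fun m hm => posPart_eq_self.mpr (sub_nonneg.mpr (hσ (mem_range.mp hm).le))
  have hterm : ∀ j : Fin N, (σ j - c) * t j ≤ (σ j - c)⁺ := fun j =>
    calc (σ j - c) * t j ≤ (σ j - c)⁺ * t j := mul_le_mul_of_nonneg_right (le_posPart _) (ht0 j)
      _ ≤ (σ j - c)⁺ := mul_le_of_le_one_right (posPart_nonneg _) (ht1 j)
  calc ∑ j : Fin N, σ j * t j = ∑ j : Fin N, (σ j - c) * t j + c * ∑ j, t j := by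
        rw [mul_sum, ← sum_add_distrib]; exact sum_congr rfl fun j _ => by ring
    _ ≤ ∑ j : Fin N, (σ j - c)⁺ + c * d :=
        add_le_add (sum_le_sum fun j _ => hterm j) (mul_le_mul_of_nonneg_left ht hσd)
    _ = ∑ m ∈ range d, σ m := by
        rw [Fin.sum_univ_eq_sum_range (fun m => (σ m - c)⁺), hpos, sum_sub_distrib, sum_const,
          card_range, nsmul_eq_mul]
        ring

theorem trace_transpose_mul_eq_trace_mul_transpose {α m n : Type*} [AddCommMonoid α] [Mul α]
    [Fintype m] [Fintype n] (M N : Matrix m n α) : (Mᵀ * N).trace = (M * Nᵀ).trace := by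
  simpa only [transpose_transpose] using trace_transpose_mul M Nᵀ

theorem transpose_submatrix_mul_mul_submatrix {α k l m n p q : Type*} [AddCommMonoid α] [Mul α]
    [Fintype k] [Fintype l] (U : Matrix k m α) (M : Matrix k l α) (V : Matrix l n α)
    (e : p → m) (e' : q → n) :
    Uᵀ.submatrix e id * M * (Vᵀ.submatrix e' id)ᵀ = (Uᵀ * M * V).submatrix e e' := by
  rw [transpose_submatrix, transpose_transpose, ← submatrix_id_id M,
    ← submatrix_mul _ _ _ _ _ Function.bijective_id,
    ← submatrix_mul _ _ _ _ _ Function.bijective_id, submatrix_id_id]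

theorem transpose_submatrix_mul_transpose_eq_one {α k m p : Type*} [Semiring α] [Fintype k]
    [DecidableEq k] [DecidableEq m] [DecidableEq p] {U : Matrix k m α} (hU : Uᵀ * U = 1) {e : p → m}
    (he : Function.Injective e) : Uᵀ.submatrix e id * (Uᵀ.submatrix e id)ᵀ = 1 := by
  simpa only [Matrix.mul_one, hU, submatrix_one _ he] using
    transpose_submatrix_mul_mul_submatrix U 1 U e e

section Whitening

variable {α ι κ : Type*} [CommSemiring α] [Fintype κ] [DecidableEq κ] {R : Matrix κ κ α}

theorem mul_mul_mul_transpose_eq {μ : Type*} [Fintype μ] (hR : R.IsSymm) {U : Matrix κ μ α}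
    (hU : U * Uᵀ = 1) (P : Matrix ι κ α) : P * R * U * (P * R * U)ᵀ = P * (R * R) * Pᵀ := by
  simp only [transpose_mul, hR.eq, Matrix.mul_assoc]
  rw [← Matrix.mul_assoc U, hU, Matrix.one_mul]

theorem mul_mul_mul_transpose_cancel {ι' μ : Type*} [Fintype μ] [DecidableEq μ] {R' : Matrix κ κ α}
    {T T' : Matrix μ μ α} (hR : R' * R = 1) (hT' : T'.IsSymm) (hT : T * T' = 1)
    (W : Matrix ι κ α) (M : Matrix κ μ α) (W' : Matrix ι' μ α) :
    W * R' * (R * M * T) * (W' * T')ᵀ = W * M * W'ᵀ := by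
  calc W * R' * (R * M * T) * (W' * T')ᵀ = W * (R' * R) * M * (T * T') * W'ᵀ := by
        simp only [transpose_mul, hT'.eq, Matrix.mul_assoc]
    _ = W * M * W'ᵀ := by rw [hR, hT, Matrix.mul_one, Matrix.mul_one]

end Whitening

section RowOrthonormal

variable {ι κ : Type*} [Fintype ι] [Fintype κ] [DecidableEq ι] {X : Matrix ι κ ℝ}

theorem sum_sq_apply_le_one_of_mul_transpose_eq_one (hX : X * Xᵀ = 1) (j : κ) :
    ∑ i, X i j ^ 2 ≤ 1 := by
  set G := Xᵀ * X
  have hdiag : G j j = ∑ i, X i j ^ 2 := by simp only [G, mul_apply, transpose_apply, sq]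
  have hidem : G * G = G := by
    simp only [G, Matrix.mul_assoc, ← Matrix.mul_assoc X Xᵀ X, hX, Matrix.one_mul]
  have hsq : G j j = ∑ k, G j k ^ 2 := by
    have hsymm : ∀ k, G k j = G j k := fun k => by
      simp only [G, mul_apply, transpose_apply, mul_comm]
    conv_lhs => rw [← hidem, mul_apply]
    exact sum_congr rfl fun k _ => by rw [hsymm, sq]
  have hle : G j j ^ 2 ≤ G j j :=
    hsq ▸ single_le_sum (f := fun k => G j k ^ 2) (fun k _ => sq_nonneg _) (mem_univ j)
  rw [← hdiag]
  nlinarith [hdiag ▸ sum_nonneg fun i (_ : i ∈ univ) => sq_nonneg (X i j)]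

theorem sum_sum_sq_eq_card_of_mul_transpose_eq_one (hX : X * Xᵀ = 1) :
    ∑ j, ∑ i, X i j ^ 2 = Fintype.card ι := by
  have h := congrArg trace hX
  rw [trace_mul_comm, trace_one] at h
  simpa only [trace, Matrix.diag, mul_apply, transpose_apply, sq] using h

end RowOrthonormal

theorem sum_mul_sum_sq_le_sum_range {N d : ℕ} (hd : d ≤ N) {σ : ℕ → ℝ} (hσ : Antitone σ)
    (hσd : 0 ≤ σ d) {X : Matrix (Fin d) (Fin N) ℝ} (hX : X * Xᵀ = 1) :
    ∑ j : Fin N, σ j * ∑ i, X i j ^ 2 ≤ ∑ m ∈ range d, σ m :=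
  sum_mul_le_sum_range_of_antitone hd hσ hσd (fun _ => sum_nonneg fun _ _ => sq_nonneg _)
    (sum_sq_apply_le_one_of_mul_transpose_eq_one hX)
    (by rw [sum_sum_sq_eq_card_of_mul_transpose_eq_one hX, Fintype.card_fin])

theorem trace_mul_mul_transpose_le {ι κ μ : Type*} [Fintype ι] [Fintype κ] [Fintype μ]
    (X : Matrix ι κ ℝ) (Y : Matrix ι μ ℝ) {S : Matrix κ μ ℝ} (hS : ∀ k l, 0 ≤ S k l)
    {r : κ → ℝ} {c : μ → ℝ} (hr : ∀ k, ∑ l, S k l ≤ r k) (hc : ∀ l, ∑ k, S k l ≤ c l) :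
    (X * S * Yᵀ).trace ≤ (∑ k, r k * ∑ i, X i k ^ 2 + ∑ l, c l * ∑ i, Y i l ^ 2) / 2 := by
  have hX : ∑ i, ∑ k, ∑ l, S k l * X i k ^ 2 ≤ ∑ k, r k * ∑ i, X i k ^ 2 := by
    rw [sum_comm]
    refine sum_le_sum fun k _ => ?_
    simp only [← sum_mul, mul_sum]
    exact sum_le_sum fun i _ => mul_le_mul_of_nonneg_right (hr k) (sq_nonneg _)
  have hY : ∑ i, ∑ k, ∑ l, S k l * Y i l ^ 2 ≤ ∑ l, c l * ∑ i, Y i l ^ 2 := by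
    rw [sum_congr rfl fun i _ => sum_comm, sum_comm]
    refine sum_le_sum fun l _ => ?_
    simp only [← sum_mul, mul_sum]
    exact sum_le_sum fun i _ => mul_le_mul_of_nonneg_right (hc l) (sq_nonneg _)
  have hterm : ∀ i k l, X i k * S k l * Y i l ≤ (S k l * X i k ^ 2 + S k l * Y i l ^ 2) / 2 :=
    fun i k l => by nlinarith [mul_nonneg (hS k l) (sq_nonneg (X i k - Y i l))]
  calc (X * S * Yᵀ).trace = ∑ i, ∑ k, ∑ l, X i k * S k l * Y i l := by
        simp only [trace, Matrix.diag, mul_apply, transpose_apply, sum_mul]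
        exact sum_congr rfl fun i _ => sum_comm
    _ ≤ ∑ i, ∑ k, ∑ l, (S k l * X i k ^ 2 + S k l * Y i l ^ 2) / 2 :=
        sum_le_sum fun i _ => sum_le_sum fun k _ => sum_le_sum fun l _ => hterm i k l
    _ ≤ _ := by
        simp only [← sum_div, sum_add_distrib]
        linarith

def rectDiagonal {a b : ℕ} (σ : ℕ → ℝ) : Matrix (Fin a) (Fin b) ℝ :=
  of fun i j => if (i : ℕ) = j then σ i else 0

section RectDiagonal

variable {a b : ℕ} {σ : ℕ → ℝ}

theorem transpose_rectDiagonal (σ : ℕ → ℝ) :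
    (rectDiagonal σ : Matrix (Fin a) (Fin b) ℝ)ᵀ = rectDiagonal σ := by
  ext i j
  by_cases h : (i : ℕ) = j <;> simp [rectDiagonal, h, eq_comm]

theorem rectDiagonal_nonneg (hσ : ∀ i, 0 ≤ σ i) (i : Fin a) (j : Fin b) :
    0 ≤ rectDiagonal σ i j := by
  simp only [rectDiagonal, of_apply]
  split_ifs
  exacts [hσ i, le_rfl]

theorem sum_rectDiagonal_le (hσ : ∀ i, 0 ≤ σ i) (i : Fin a) :
    ∑ j : Fin b, rectDiagonal σ i j ≤ σ i := by
  have hcard : #{j : Fin b | (i : ℕ) = j} ≤ 1 := card_le_one.mpr fun j hj j' hj' =>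
    Fin.ext ((mem_filter.mp hj).2.symm.trans (mem_filter.mp hj').2)
  simp only [rectDiagonal, of_apply, ← sum_filter, sum_const, nsmul_eq_mul]
  exact mul_le_of_le_one_left (hσ i) (by exact_mod_cast hcard)

theorem trace_mul_rectDiagonal_mul_transpose_le {d : ℕ} (hda : d ≤ a) (hdb : d ≤ b)
    (hσ : Antitone σ) (hσ0 : ∀ i, 0 ≤ σ i) {X : Matrix (Fin d) (Fin a) ℝ}
    {Y : Matrix (Fin d) (Fin b) ℝ} (hX : X * Xᵀ = 1) (hY : Y * Yᵀ = 1) :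
    (X * (rectDiagonal σ : Matrix (Fin a) (Fin b) ℝ) * Yᵀ).trace ≤ ∑ m ∈ range d, σ m := by
  have hcol (l : Fin b) : ∑ k : Fin a, rectDiagonal σ k l ≤ σ l := by
    have h := sum_rectDiagonal_le (b := a) hσ0 l
    rwa [← transpose_rectDiagonal] at h
  refine (trace_mul_mul_transpose_le X Y (rectDiagonal_nonneg hσ0) (sum_rectDiagonal_le hσ0)
    hcol).trans ?_
  linarith [sum_mul_sum_sq_le_sum_range hda hσ (hσ0 d) hX,
    sum_mul_sum_sq_le_sum_range hdb hσ (hσ0 d) hY]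

theorem trace_submatrix_castLE_rectDiagonal {d : ℕ} (hda : d ≤ a) (hdb : d ≤ b) :
    ((rectDiagonal σ : Matrix (Fin a) (Fin b) ℝ).submatrix (Fin.castLE hda)
      (Fin.castLE hdb)).trace = ∑ m ∈ range d, σ m := by
  simp [trace, rectDiagonal, Fin.sum_univ_eq_sum_range]

end RectDiagonal

theorem cca_closed_form_general {n da db d' : ℕ} (hd'a : d' ≤ da) (hd'b : d' ≤ db)
    (A : Matrix (Fin n) (Fin da) ℝ) (B : Matrix (Fin n) (Fin db) ℝ)
    (Rx Rxi : Matrix (Fin da) (Fin da) ℝ) (Ry Ryi : Matrix (Fin db) (Fin db) ℝ)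
    (hRx_symm : Rx.IsSymm) (hRy_symm : Ry.IsSymm)
    (hRxi_symm : Rxi.IsSymm) (hRyi_symm : Ryi.IsSymm)
    (hRx_sq : Rx * Rx = Aᵀ * A) (hRy_sq : Ry * Ry = Bᵀ * B)
    (hRx_inv : Rx * Rxi = 1) (hRx_inv' : Rxi * Rx = 1)
    (hRy_inv : Ry * Ryi = 1) (hRy_inv' : Ryi * Ry = 1)
    (U : Matrix (Fin da) (Fin da) ℝ) (V : Matrix (Fin db) (Fin db) ℝ)
    (σ : ℕ → ℝ)
    (hU : U * Uᵀ = 1) (hU' : Uᵀ * U = 1)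
    (hV : V * Vᵀ = 1) (hV' : Vᵀ * V = 1)
    (hσ_nonneg : ∀ i, 0 ≤ σ i)
    (hσ_anti : ∀ i j : ℕ, i ≤ j → σ j ≤ σ i)
    (hSVD : Rxi * (Aᵀ * B) * Ryi =
      U * (Matrix.of fun (i : Fin da) (j : Fin db) =>
        if (i : ℕ) = (j : ℕ) then σ (i : ℕ) else 0) * Vᵀ) :
    (∀ (P : Matrix (Fin d') (Fin da) ℝ) (Q : Matrix (Fin d') (Fin db) ℝ),
        P * (Aᵀ * A) * Pᵀ = 1 → Q * (Bᵀ * B) * Qᵀ = 1 →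
        ((P * (Aᵀ * B))ᵀ * Q).trace ≤ ∑ i ∈ Finset.range d', σ i) ∧
    (let P₀ : Matrix (Fin d') (Fin da) ℝ :=
       (Matrix.of fun i j => U j (Fin.castLE hd'a i)) * Rxi
     let Q₀ : Matrix (Fin d') (Fin db) ℝ :=
       (Matrix.of fun i j => V j (Fin.castLE hd'b i)) * Ryi
     P₀ * (Aᵀ * A) * P₀ᵀ = 1 ∧ Q₀ * (Bᵀ * B) * Q₀ᵀ = 1 ∧
       ((P₀ * (Aᵀ * B))ᵀ * Q₀).trace = ∑ i ∈ Finset.range d', σ i) := by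
  set S : Matrix (Fin da) (Fin db) ℝ := rectDiagonal σ
  change _ = U * S * Vᵀ at hSVD
  have hAB : Aᵀ * B = Rx * (U * S * Vᵀ) * Ry := by
    rw [← hSVD, ← Matrix.mul_assoc, ← Matrix.mul_assoc, hRx_inv, Matrix.one_mul,
      Matrix.mul_assoc, hRy_inv', Matrix.mul_one]
  refine ⟨fun P Q hP hQ => ?_, ?_⟩
  · have hX : P * Rx * U * (P * Rx * U)ᵀ = 1 := by
      rwa [mul_mul_mul_transpose_eq hRx_symm hU, hRx_sq]
    have hY : Q * Ry * V * (Q * Ry * V)ᵀ = 1 := by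
      rwa [mul_mul_mul_transpose_eq hRy_symm hV, hRy_sq]
    have hobj : P * (Aᵀ * B) * Qᵀ = P * Rx * U * S * (Q * Ry * V)ᵀ := by
      simp only [hAB, transpose_mul, hRy_symm.eq, Matrix.mul_assoc]
    rw [trace_transpose_mul_eq_trace_mul_transpose, hobj]
    exact trace_mul_rectDiagonal_mul_transpose_le hd'a hd'b hσ_anti hσ_nonneg hX hY
  · intro P₀ Q₀
    have hP₀ : P₀ = Uᵀ.submatrix (Fin.castLE hd'a) id * Rxi := rfl
    have hQ₀ : Q₀ = Vᵀ.submatrix (Fin.castLE hd'b) id * Ryi := rfl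
    have hAA : Aᵀ * A = Rx * 1 * Rx := by rw [Matrix.mul_one, hRx_sq]
    have hBB : Bᵀ * B = Ry * 1 * Ry := by rw [Matrix.mul_one, hRy_sq]
    refine ⟨?_, ?_, ?_⟩
    · rw [hP₀, hAA, mul_mul_mul_transpose_cancel hRx_inv' hRxi_symm hRx_inv, Matrix.mul_one]
      exact transpose_submatrix_mul_transpose_eq_one hU' (Fin.castLE_injective hd'a)
    · rw [hQ₀, hBB, mul_mul_mul_transpose_cancel hRy_inv' hRyi_symm hRy_inv, Matrix.mul_one]
      exact transpose_submatrix_mul_transpose_eq_one hV' (Fin.castLE_injective hd'b)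
    · have hUSV : Uᵀ * (U * S * Vᵀ) * V = S := by
        simp only [Matrix.mul_assoc]
        rw [← Matrix.mul_assoc Uᵀ, hU', Matrix.one_mul, hV', Matrix.mul_one]
      rw [trace_transpose_mul_eq_trace_mul_transpose, hP₀, hQ₀, hAB,
        mul_mul_mul_transpose_cancel hRx_inv' hRyi_symm hRy_inv,
        transpose_submatrix_mul_mul_submatrix, hUSV]
      exact trace_submatrix_castLE_rectDiagonal hd'a hd'b

/-- Closed-form solution of CCA: with `Σxx = AᵀA`, `Σyy = BᵀB` positive definite with
symmetric square roots `Rx, Ry` and inverses `Rxi, Ryi`, and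
`M = Σxx^{-1/2} Σxy Σyy^{-1/2} = U S Vᵀ` an SVD with nonincreasing singular values `σ`, the
objective `⟨PΣxy, Q⟩` over whitened pairs (`PΣxxPᵀ = QΣyyQᵀ = I`) is maximized by
`P = U_{:,1:d'}ᵀ Σxx^{-1/2}`, `Q = V_{:,1:d'}ᵀ Σyy^{-1/2}`, with value `σ₁ + ... + σ_{d'}`. -/
theorem cca_closed_form {n da db d' : ℕ} (hd'a : d' ≤ da) (hd'b : d' ≤ db)
    (A : Matrix (Fin n) (Fin da) ℝ) (B : Matrix (Fin n) (Fin db) ℝ)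
    (Rx Rxi : Matrix (Fin da) (Fin da) ℝ) (Ry Ryi : Matrix (Fin db) (Fin db) ℝ)
    (hRx_symm : Rx.IsSymm) (hRy_symm : Ry.IsSymm)
    (hRxi_symm : Rxi.IsSymm) (hRyi_symm : Ryi.IsSymm)
    (hRx_pd : Rx.PosDef) (hRy_pd : Ry.PosDef)
    (hRx_sq : Rx * Rx = Aᵀ * A) (hRy_sq : Ry * Ry = Bᵀ * B)
    (hRx_inv : Rx * Rxi = 1) (hRx_inv' : Rxi * Rx = 1)
    (hRy_inv : Ry * Ryi = 1) (hRy_inv' : Ryi * Ry = 1)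
    (U : Matrix (Fin da) (Fin da) ℝ) (V : Matrix (Fin db) (Fin db) ℝ)
    (σ : ℕ → ℝ)
    (hU : U * Uᵀ = 1) (hU' : Uᵀ * U = 1)
    (hV : V * Vᵀ = 1) (hV' : Vᵀ * V = 1)
    (hσ_nonneg : ∀ i, 0 ≤ σ i)
    (hσ_anti : ∀ i j : ℕ, i ≤ j → σ j ≤ σ i)
    (hSVD : Rxi * (Aᵀ * B) * Ryi =
      U * (Matrix.of fun (i : Fin da) (j : Fin db) =>
        if (i : ℕ) = (j : ℕ) then σ (i : ℕ) else 0) * Vᵀ) :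
    (∀ (P : Matrix (Fin d') (Fin da) ℝ) (Q : Matrix (Fin d') (Fin db) ℝ),
        P * (Aᵀ * A) * Pᵀ = 1 → Q * (Bᵀ * B) * Qᵀ = 1 →
        ((P * (Aᵀ * B))ᵀ * Q).trace ≤ ∑ i ∈ Finset.range d', σ i) ∧
    (let P₀ : Matrix (Fin d') (Fin da) ℝ :=
       (Matrix.of fun i j => U j (Fin.castLE hd'a i)) * Rxi
     let Q₀ : Matrix (Fin d') (Fin db) ℝ :=
       (Matrix.of fun i j => V j (Fin.castLE hd'b i)) * Ryi
     P₀ * (Aᵀ * A) * P₀ᵀ = 1 ∧ Q₀ * (Bᵀ * B) * Q₀ᵀ = 1 ∧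
       ((P₀ * (Aᵀ * B))ᵀ * Q₀).trace = ∑ i ∈ Finset.range d', σ i) :=
  cca_closed_form_general hd'a hd'b A B Rx Rxi Ry Ryi hRx_symm hRy_symm hRxi_symm hRyi_symm hRx_sq
    hRy_sq hRx_inv hRx_inv' hRy_inv hRy_inv' U V σ hU hU' hV hV' hσ_nonneg hσ_anti hSVD
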